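/- Let n, p, k be positive integers with k ≤ n. Let V ∈ ℝ^{n×n} be symmetric positive definite, let Y ∈ ℝ^{p×n}, and set S = p^{-1} YᵀY. Let μ₁ ≥ ⋯ ≥ μ_n denote the eigenvalues of V^{-1/2} S V^{-1/2} (counted with multiplicity, ordered non-increasingly), and let W ∈ ℝ^{n×k} have orthonormal columns whose j-th column is an eigenvector of V^{-1/2} S V^{-1/2} associated with μ_j for j = 1,…,k. Then for every U ∈ ℝ^{n×k} of rank k, the matrix Uᵀ V^{-1} U is invertible and Tr{(Uᵀ V^{-1} S V^{-1} U)(Uᵀ V^{-1} U)^{-1}} ≤ μ₁ + ⋯ + μ_k; moreover equality holds for U = V^{1/2} W. -/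

import Mathlib

/-!
Writing `B = V^{-1/2} U`, the objective is `tr (M P)` for the orthogonal projection
`P = B (BᵀB)⁻¹ Bᵀ` onto the column space of `B`, with `M = V^{-1/2} S V^{-1/2}`. In an
eigenbasis of `M` this trace is `∑ μᵢ cᵢ`, where the weights `cᵢ` are the diagonal entries of
a conjugate of `P`: they lie in `[0, 1]` and sum to `tr P = k`. Such a weighted sum is at
most the sum of the `k` largest `μᵢ` (Ky Fan). For `U = V^{1/2} W` we get `B = W`, whose
columns are orthonormal eigenvectors for `μ₁, …, μ_k`, and the trace is exactly their sum.
-/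

open Matrix BigOperators

/-- The `k`-th largest eigenvalue (0-indexed: `k = 0` is the largest) of a
Hermitian real matrix, counted with multiplicity. -/
noncomputable def eigsDesc {n : ℕ} {A : Matrix (Fin n) (Fin n) ℝ} (hA : A.IsHermitian)
    (k : Fin n) : ℝ :=
  (hA.eigenvalues ∘ Tuple.sort hA.eigenvalues) k.rev

/-- The positive semidefinite square root of a positive semidefinite matrix, with the
definition `Matrix.PosSemidef.sqrt` had in the older Mathlib. -/
noncomputable def posSemidefSqrt {n : Type*} [Fintype n]
    [DecidableEq n] {A : Matrix n n ℝ} (hA : A.PosSemidef) : Matrix n n ℝ :=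
  hA.1.eigenvectorUnitary.1 * diagonal ((√·) ∘ hA.1.eigenvalues) *
    (star hA.1.eigenvectorUnitary : Matrix n n ℝ)

open Finset

theorem sum_mul_le_sum_of_threshold {ι : Type*} [Fintype ι] [DecidableEq ι] {g c : ι → ℝ}
    {T : Finset ι} (t : ℝ) (hT : ∀ i ∈ T, t ≤ g i) (hTc : ∀ i ∉ T, g i ≤ t)
    (hc0 : ∀ i, 0 ≤ c i) (hc1 : ∀ i, c i ≤ 1) (hc : ∑ i, c i = #T) :
    ∑ i, g i * c i ≤ ∑ i ∈ T, g i := by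
  have hterm : ∀ i, (g i - t) * (c i - if i ∈ T then 1 else 0) ≤ 0 := by
    intro i
    by_cases hi : i ∈ T
    · rw [if_pos hi]
      exact mul_nonpos_of_nonneg_of_nonpos (sub_nonneg.2 (hT i hi)) (sub_nonpos.2 (hc1 i))
    · rw [if_neg hi, sub_zero]
      exact mul_nonpos_of_nonpos_of_nonneg (sub_nonpos.2 (hTc i hi)) (hc0 i)
  have hsum : ∑ i, (g i - t) * (c i - if i ∈ T then 1 else 0)
      = ∑ i, g i * c i - ∑ i ∈ T, g i := by
    simp only [mul_sub, sub_mul, mul_ite, mul_one, mul_zero, sum_sub_distrib, ← mul_sum,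
      sum_ite_mem, univ_inter, hc, sum_const, nsmul_eq_mul]
    ring
  linarith [sum_nonpos fun i (_ : i ∈ univ) => hterm i]

theorem Fin.sum_Ici_eq_sum_rev_castLE {M : Type*} [AddCommMonoid M] {n k : ℕ} (hkn : k ≤ n)
    (h : n - k < n) (f : Fin n → M) :
    ∑ i ∈ Ici (⟨n - k, h⟩ : Fin n), f i = ∑ j : Fin k, f (Fin.castLE hkn j).rev := by
  refine sum_bij' (fun i hi => ⟨n - 1 - i, ?_⟩) (fun j _ => (Fin.castLE hkn j).rev)
    (fun _ _ => mem_univ _) ?_ ?_ ?_ ?_ <;> intros <;> (try congr 1) <;>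
    simp_all [Fin.le_def, Fin.ext_iff] <;> omega

namespace Matrix.IsHermitian

variable {n : Type*} [Fintype n] [DecidableEq n] {A : Matrix n n ℝ} (hA : A.IsHermitian)

theorem transpose_eigenvectorUnitary_mul_self :
    (hA.eigenvectorUnitary.1)ᵀ * hA.eigenvectorUnitary.1 = 1 := by
  simpa [star_eq_conjTranspose] using Unitary.coe_star_mul_self hA.eigenvectorUnitary

theorem eigenvectorUnitary_mul_transpose_self :
    hA.eigenvectorUnitary.1 * (hA.eigenvectorUnitary.1)ᵀ = 1 := by
  simpa [star_eq_conjTranspose] using Unitary.coe_mul_star_self hA.eigenvectorUnitary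

theorem spectral_theorem_real :
    A = hA.eigenvectorUnitary.1 * diagonal hA.eigenvalues * (hA.eigenvectorUnitary.1)ᵀ := by
  conv_lhs => rw [hA.spectral_theorem]
  simp [star_eq_conjTranspose]

theorem trace_mul_eq_sum_eigenvalues_mul (P : Matrix n n ℝ) :
    (A * P).trace = ∑ i, hA.eigenvalues i *
      ((hA.eigenvectorUnitary.1)ᵀ * P * hA.eigenvectorUnitary.1) i i := by
  conv_lhs => rw [hA.spectral_theorem_real, Matrix.mul_assoc, trace_mul_cycle]
  simp [trace, mul_diagonal, mul_comm]

end Matrix.IsHermitian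

open scoped MatrixOrder in
theorem trace_mul_le_sum_eigsDesc {n k : ℕ} (hk : 0 < k) (hkn : k ≤ n)
    {M : Matrix (Fin n) (Fin n) ℝ} (hM : M.IsHermitian) {P : Matrix (Fin n) (Fin n) ℝ}
    (hP0 : 0 ≤ P) (hP1 : P ≤ 1) (hPk : P.trace = k) :
    (M * P).trace ≤ ∑ j : Fin k, eigsDesc hM (Fin.castLE hkn j) := by
  set Q := hM.eigenvectorUnitary.1
  have hQ : Qᵀ * Q = 1 := hM.transpose_eigenvectorUnitary_mul_self
  have hC0 : ∀ i, 0 ≤ (Qᵀ * P * Q) i i := fun i => by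
    simpa using (hP0.posSemidef.conjTranspose_mul_mul_same Q).diag_nonneg (i := i)
  have hC1 : ∀ i, (Qᵀ * P * Q) i i ≤ 1 := fun i => by
    have h := ((le_iff.1 hP1).conjTranspose_mul_mul_same Q).diag_nonneg (i := i)
    simp only [conjTranspose_eq_transpose_of_trivial, Matrix.mul_sub, Matrix.sub_mul,
      Matrix.mul_one, hQ] at h
    simpa using h
  have hCk : ∑ i, (Qᵀ * P * Q) i i = k := by
    change (Qᵀ * P * Q).trace = k
    rw [← hPk, trace_mul_cycle, hM.eigenvectorUnitary_mul_transpose_self,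
      Matrix.one_mul]
  set σ := Tuple.sort hM.eigenvalues
  have hnk : n - k < n := by omega
  rw [hM.trace_mul_eq_sum_eigenvalues_mul, ← Equiv.sum_comp σ]
  -- `eigsDesc` reads the increasingly sorted eigenvalues backwards, so the `k` largest ones
  -- sit at the sorted positions `≥ n - k`.
  unfold eigsDesc
  rw [← Fin.sum_Ici_eq_sum_rev_castLE hkn hnk]
  have hsorted : Monotone (hM.eigenvalues ∘ σ) := Tuple.monotone_sort _
  refine sum_mul_le_sum_of_threshold (hM.eigenvalues (σ ⟨n - k, hnk⟩))
    (fun _ hi => hsorted (mem_Ici.1 hi)) (fun _ hi => hsorted (le_of_lt (by simpa using hi)))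
    (fun _ => hC0 _) (fun _ => hC1 _) ?_
  rw [Equiv.sum_comp σ (fun i => (Qᵀ * P * Q) i i), hCk, Fin.card_Ici, Fin.val_mk,
    Nat.sub_sub_self hkn]

section Projection

variable {m k : Type*} [Fintype m] [Fintype k] [DecidableEq k] {B : Matrix m k ℝ}

theorem isStarProjection_mul_inv_mul_transpose (hB : IsUnit (Bᵀ * B).det) :
    IsStarProjection (B * (Bᵀ * B)⁻¹ * Bᵀ) := by
  refine ⟨?_, ?_⟩
  · change _ * _ = _
    rw [show B * (Bᵀ * B)⁻¹ * Bᵀ * (B * (Bᵀ * B)⁻¹ * Bᵀ)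
        = B * ((Bᵀ * B)⁻¹ * (Bᵀ * B)) * (Bᵀ * B)⁻¹ * Bᵀ by simp only [Matrix.mul_assoc],
      nonsing_inv_mul _ hB, Matrix.mul_one]
  · rw [IsSelfAdjoint, star_eq_conjTranspose, conjTranspose_eq_transpose_of_trivial]
    simp [transpose_nonsing_inv, Matrix.mul_assoc]

theorem trace_mul_inv_mul_transpose (hB : IsUnit (Bᵀ * B).det) :
    (B * (Bᵀ * B)⁻¹ * Bᵀ).trace = Fintype.card k := by
  rw [trace_mul_comm, ← Matrix.mul_assoc, mul_nonsing_inv _ hB, trace_one]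

end Projection

open scoped MatrixOrder in
theorem trace_transpose_mul_mul_mul_inv_le {n k : ℕ} (hk : 0 < k) (hkn : k ≤ n)
    {M : Matrix (Fin n) (Fin n) ℝ} (hM : M.IsHermitian) {B : Matrix (Fin n) (Fin k) ℝ}
    (hB : IsUnit (Bᵀ * B).det) :
    ((Bᵀ * M * B) * (Bᵀ * B)⁻¹).trace ≤ ∑ j : Fin k, eigsDesc hM (Fin.castLE hkn j) := by
  have hP := isStarProjection_mul_inv_mul_transpose hB
  rw [Matrix.mul_assoc, Matrix.mul_assoc, trace_mul_comm, Matrix.mul_assoc]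
  refine trace_mul_le_sum_eigsDesc hk hkn hM hP.nonneg hP.le_one ?_
  rw [trace_mul_inv_mul_transpose hB, Fintype.card_fin]

theorem Matrix.mulVec_injective_of_rank_eq_card {K m k : Type*} [Field K] [Fintype m]
    [Fintype k] {B : Matrix m k K} (hB : B.rank = Fintype.card k) :
    Function.Injective B.mulVec := by
  have hker := LinearMap.finrank_range_add_finrank_ker B.mulVecLin
  rw [Module.finrank_fintype_fun_eq_card, ← rank, hB, add_eq_left,
    Submodule.finrank_eq_zero, LinearMap.ker_eq_bot] at hker
  exact hker

theorem trace_transpose_mul_mul_eq_sum {m k : Type*} [Fintype m] [Fintype k] [DecidableEq k]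
    {M : Matrix m m ℝ} {W : Matrix m k ℝ} (hW : Wᵀ * W = 1) {d : k → ℝ}
    (hWd : ∀ j, M *ᵥ (fun i => W i j) = d j • fun i => W i j) :
    (Wᵀ * M * W).trace = ∑ j, d j := by
  have hMW : M * W = W * diagonal d := by
    ext i j
    rw [mul_diagonal, mul_comm]
    simpa [mul_apply, mulVec, dotProduct] using congrFun (hWd j) i
  rw [Matrix.mul_assoc, hMW, ← Matrix.mul_assoc, hW, Matrix.one_mul, trace_diagonal]

section Sqrt

variable {n : Type*} [Fintype n] [DecidableEq n] {A : Matrix n n ℝ}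

theorem transpose_posSemidefSqrt (hA : A.PosSemidef) :
    (posSemidefSqrt hA)ᵀ = posSemidefSqrt hA := by
  simp [posSemidefSqrt, transpose_mul, star_eq_conjTranspose, Matrix.mul_assoc]

theorem posSemidefSqrt_mul_self (hA : A.PosSemidef) :
    posSemidefSqrt hA * posSemidefSqrt hA = A := by
  set Q := hA.1.eigenvectorUnitary.1
  have hsqrt : posSemidefSqrt hA = Q * diagonal ((√·) ∘ hA.1.eigenvalues) * Qᵀ := by
    simp [posSemidefSqrt, Q, star_eq_conjTranspose]
  have hdiag : diagonal ((√·) ∘ hA.1.eigenvalues) * diagonal ((√·) ∘ hA.1.eigenvalues)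
      = diagonal hA.1.eigenvalues := by
    rw [diagonal_mul_diagonal]
    exact congrArg diagonal (funext fun i => Real.mul_self_sqrt (hA.eigenvalues_nonneg i))
  calc posSemidefSqrt hA * posSemidefSqrt hA
      = Q * (diagonal ((√·) ∘ hA.1.eigenvalues) * (Qᵀ * Q) *
          diagonal ((√·) ∘ hA.1.eigenvalues)) * Qᵀ := by
        simp only [hsqrt, Matrix.mul_assoc]
    _ = A := by
      rw [hA.1.transpose_eigenvectorUnitary_mul_self, Matrix.mul_one, hdiag,
        ← hA.1.spectral_theorem_real]

theorem isUnit_det_posSemidefSqrt (hA : A.PosDef) :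
    IsUnit (posSemidefSqrt hA.posSemidef).det := by
  rw [isUnit_iff_ne_zero]
  intro h
  have := congrArg det (posSemidefSqrt_mul_self hA.posSemidef)
  rw [det_mul, h, zero_mul] at this
  exact hA.det_pos.ne this

end Sqrt

theorem stmt0 (n k : ℕ) (hk : 0 < k) (hkn : k ≤ n)
    (V : Matrix (Fin n) (Fin n) ℝ) (hV : V.PosDef)
    (S : Matrix (Fin n) (Fin n) ℝ)
    (M : Matrix (Fin n) (Fin n) ℝ)
    (hM : M = (posSemidefSqrt hV.posSemidef)⁻¹ * S * (posSemidefSqrt hV.posSemidef)⁻¹)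
    (hMh : M.IsHermitian)
    (W : Matrix (Fin n) (Fin k) ℝ) (hW : Wᵀ * W = 1)
    (hWeig : ∀ j : Fin k,
      M.mulVec (fun i => W i j) = eigsDesc hMh (Fin.castLE hkn j) • (fun i => W i j)) :
    (∀ U : Matrix (Fin n) (Fin k) ℝ, U.rank = k →
        IsUnit (Uᵀ * V⁻¹ * U).det ∧
        Matrix.trace ((Uᵀ * V⁻¹ * S * V⁻¹ * U) * (Uᵀ * V⁻¹ * U)⁻¹)
          ≤ ∑ j : Fin k, eigsDesc hMh (Fin.castLE hkn j)) ∧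
    Matrix.trace
        (((posSemidefSqrt hV.posSemidef * W)ᵀ * V⁻¹ * S * V⁻¹ * (posSemidefSqrt hV.posSemidef * W)) *
          ((posSemidefSqrt hV.posSemidef * W)ᵀ * V⁻¹ * (posSemidefSqrt hV.posSemidef * W))⁻¹)
      = ∑ j : Fin k, eigsDesc hMh (Fin.castLE hkn j) := by
  set R := posSemidefSqrt hV.posSemidef
  have hR : IsUnit R.det := isUnit_det_posSemidefSqrt hV
  have hRinv : (R⁻¹)ᵀ = R⁻¹ := by rw [transpose_nonsing_inv, transpose_posSemidefSqrt]
  have hVinv : V⁻¹ = R⁻¹ * R⁻¹ := by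
    rw [← posSemidefSqrt_mul_self hV.posSemidef, Matrix.mul_inv_rev]
  have hgram (U : Matrix (Fin n) (Fin k) ℝ) : Uᵀ * V⁻¹ * U = (R⁻¹ * U)ᵀ * (R⁻¹ * U) := by
    rw [hVinv, transpose_mul, hRinv]
    simp only [Matrix.mul_assoc]
  have hquad (U : Matrix (Fin n) (Fin k) ℝ) :
      Uᵀ * V⁻¹ * S * V⁻¹ * U = (R⁻¹ * U)ᵀ * M * (R⁻¹ * U) := by
    rw [hVinv, hM, transpose_mul, hRinv]
    simp only [Matrix.mul_assoc]
  refine ⟨fun U hU => ?_, ?_⟩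
  · have hrank : (R⁻¹ * U).rank = Fintype.card (Fin k) := by
      rw [rank_mul_eq_right_of_isUnit_det _ _ (isUnit_nonsing_inv_det _ hR), hU,
        Fintype.card_fin]
    have hB : IsUnit ((R⁻¹ * U)ᵀ * (R⁻¹ * U)).det := by
      simpa [isUnit_iff_isUnit_det] using
        (PosDef.conjTranspose_mul_self _ (mulVec_injective_of_rank_eq_card hrank)).isUnit
    rw [hgram, hquad]
    exact ⟨hB, trace_transpose_mul_mul_mul_inv_le hk hkn hMh hB⟩
  · have hRW : R⁻¹ * (R * W) = W := by
      rw [← Matrix.mul_assoc, nonsing_inv_mul _ hR, Matrix.one_mul]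
    rw [hgram, hquad, hRW, hW, inv_one, Matrix.mul_one]
    exact trace_transpose_mul_mul_eq_sum hW hWeig
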